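/- arXiv:2502.03735 — 2 statements merged into one kernel-verified Lean document; each statement's English description precedes it below -/
import Mathlib

section
/- The map F ↦ F Fᵀ F on real d×d matrices is monotone: for all F, G ∈ ℝ^{d×d}, (F Fᵀ F − G Gᵀ G) : (F − G) ≥ 0, where A : B denotes the Frobenius inner product. -/
open Matrix BigOperators

/-- Frobenius inner product of two real `d × d` matrices. -/
noncomputable def frobInner {d : ℕ} (A B : Matrix (Fin d) (Fin d) ℝ) : ℝ :=
  ∑ i, ∑ j, A i j * B i j

private lemma frob_trace {d : ℕ} (A B : Matrix (Fin d) (Fin d) ℝ) :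
    frobInner A B = (A * Bᵀ).trace := by
  simp [frobInner, Matrix.trace, Matrix.diag, Matrix.mul_apply]

private lemma frob_self_nonneg {d : ℕ} (A : Matrix (Fin d) (Fin d) ℝ) :
    0 ≤ frobInner A A := by
  apply Finset.sum_nonneg
  intro i _
  exact Finset.sum_nonneg fun j _ => mul_self_nonneg _

private lemma cyc {d : ℕ} (a b c e : Matrix (Fin d) (Fin d) ℝ) :
    (a*(b*(c*e))).trace = (e*(a*(b*c))).trace := by
  rw [show a*(b*(c*e)) = (a*(b*c))*e by noncomm_ring]
  exact Matrix.trace_mul_comm _ _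

private lemma tp {d : ℕ} (a b c e : Matrix (Fin d) (Fin d) ℝ) :
    (a*(b*(c*e))).trace = (eᵀ*(cᵀ*(bᵀ*aᵀ))).trace := by
  rw [← Matrix.trace_transpose (a*(b*(c*e)))]
  simp [Matrix.transpose_mul, mul_assoc]

theorem monotone_FFTF {d : ℕ} (F G : Matrix (Fin d) (Fin d) ℝ) :
    0 ≤ frobInner (F * Fᵀ * F - G * Gᵀ * G) (F - G) := by
  have key : 2 * frobInner (F * Fᵀ * F - G * Gᵀ * G) (F - G)
      = frobInner (F * Fᵀ - G * Gᵀ) (F * Fᵀ - G * Gᵀ)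
        + frobInner (Fᵀ * (F - G)) (Fᵀ * (F - G))
        + frobInner (Gᵀ * (F - G)) (Gᵀ * (F - G)) := by
    have e1 : (G*(Gᵀ*(F*Fᵀ))).trace = (F*(Fᵀ*(G*Gᵀ))).trace := by
      have := Matrix.trace_mul_comm (G*Gᵀ) (F*Fᵀ); simpa [mul_assoc] using this
    have e2 := cyc Fᵀ F Fᵀ F
    have e3 := cyc Fᵀ F Gᵀ F
    have e4 : (Fᵀ*(G*(Fᵀ*F))).trace = (F*(Fᵀ*(F*Gᵀ))).trace := by
      rw [tp Fᵀ G Fᵀ F]; simpa using cyc Fᵀ F Gᵀ F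
    have e5 := cyc Fᵀ G Gᵀ F
    have e6 : (Gᵀ*(F*(Fᵀ*G))).trace = (F*(Fᵀ*(G*Gᵀ))).trace := by
      rw [cyc Gᵀ F Fᵀ G]; exact e1
    have e7 : (Gᵀ*(F*(Gᵀ*G))).trace = (G*(Gᵀ*(G*Fᵀ))).trace := by
      rw [tp Gᵀ F Gᵀ G]; simpa using cyc Gᵀ G Fᵀ G
    have e8 := cyc Gᵀ G Fᵀ G
    have e9 := cyc Gᵀ G Gᵀ G
    simp only [frob_trace, Matrix.transpose_sub, Matrix.transpose_mul,
      Matrix.transpose_transpose, Matrix.mul_sub, Matrix.sub_mul,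
      Matrix.trace_sub, mul_assoc]
    linarith [e1, e2, e3, e4, e5, e6, e7, e8, e9]
  have n1 := frob_self_nonneg (F * Fᵀ - G * Gᵀ)
  have n2 := frob_self_nonneg (Fᵀ * (F - G))
  have n3 := frob_self_nonneg (Gᵀ * (F - G))
  linarith
end

section
/- Let (aₙ) be a sequence of positive reals and a > 0 such that (ln aₙ − ln a)(aₙ^{1/3} − a^{1/3}) → 0. Then aₙ → a. -/
open Filter

theorem tendsto_of_log_cbrt_product_tendsto_zero
    (a : ℕ → ℝ) (l : ℝ) (ha : ∀ n, 0 < a n) (hl : 0 < l)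
    (h : Tendsto (fun n => (Real.log (a n) - Real.log l) *
        ((a n) ^ (1 / 3 : ℝ) - l ^ (1 / 3 : ℝ))) atTop (nhds 0)) :
    Tendsto a atTop (nhds l) := by
  rw [Metric.tendsto_atTop]
  intro ε hε
  set ε' := min ε (l / 2) with hε'def
  have hε' : 0 < ε' := lt_min hε (by linarith)
  have hε'le : ε' ≤ ε := min_le_left _ _
  have hlε : 0 < l - ε' := by
    have : ε' ≤ l / 2 := min_le_right _ _
    linarith
  set c₁ := (Real.log (l + ε') - Real.log l) * ((l + ε') ^ (1/3 : ℝ) - l ^ (1/3 : ℝ)) with hc₁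
  set c₂ := (Real.log l - Real.log (l - ε')) * (l ^ (1/3 : ℝ) - (l - ε') ^ (1/3 : ℝ)) with hc₂
  have hlog1 : Real.log l < Real.log (l + ε') := Real.log_lt_log hl (by linarith)
  have hlog2 : Real.log (l - ε') < Real.log l := Real.log_lt_log hlε (by linarith)
  have hpow1 : l ^ (1/3 : ℝ) < (l + ε') ^ (1/3 : ℝ) :=
    Real.rpow_lt_rpow hl.le (by linarith) (by norm_num)
  have hpow2 : (l - ε') ^ (1/3 : ℝ) < l ^ (1/3 : ℝ) :=
    Real.rpow_lt_rpow hlε.le (by linarith) (by norm_num)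
  have hc₁pos : 0 < c₁ := mul_pos (by linarith) (by linarith)
  have hc₂pos : 0 < c₂ := mul_pos (by linarith) (by linarith)
  obtain ⟨N, hN⟩ := (Metric.tendsto_atTop.mp h) (min c₁ c₂) (lt_min hc₁pos hc₂pos)
  refine ⟨N, fun n hn => ?_⟩
  have hprod := hN n hn
  rw [Real.dist_eq, sub_zero] at hprod
  rw [Real.dist_eq]
  by_contra hcon
  push_neg at hcon
  have hε'lt : ε' ≤ |a n - l| := le_trans hε'le hcon
  rcases le_abs.mp hε'lt with h1 | h1
  · -- a n ≥ l + ε'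
    have hle : l + ε' ≤ a n := by linarith
    have hlogle : Real.log (l + ε') ≤ Real.log (a n) :=
      Real.log_le_log (by linarith) hle
    have hpowle : (l + ε') ^ (1/3 : ℝ) ≤ (a n) ^ (1/3 : ℝ) :=
      Real.rpow_le_rpow (by linarith) hle (by norm_num)
    have hkey : c₁ ≤ (Real.log (a n) - Real.log l) * ((a n) ^ (1/3 : ℝ) - l ^ (1/3 : ℝ)) :=
      mul_le_mul (by linarith) (by linarith) (by linarith) (by linarith)
    have habs := le_abs_self ((Real.log (a n) - Real.log l) * ((a n) ^ (1/3 : ℝ) - l ^ (1/3 : ℝ)))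
    have := min_le_left c₁ c₂
    linarith [hprod]
  · -- a n ≤ l - ε'
    have hle : a n ≤ l - ε' := by linarith
    have hlogle : Real.log (a n) ≤ Real.log (l - ε') :=
      Real.log_le_log (ha n) hle
    have hpowle : (a n) ^ (1/3 : ℝ) ≤ (l - ε') ^ (1/3 : ℝ) :=
      Real.rpow_le_rpow (ha n).le hle (by norm_num)
    have hkey : c₂ ≤ (Real.log l - Real.log (a n)) * (l ^ (1/3 : ℝ) - (a n) ^ (1/3 : ℝ)) :=
      mul_le_mul (by linarith) (by linarith) (by linarith) (by linarith)
    have heq : (Real.log l - Real.log (a n)) * (l ^ (1/3 : ℝ) - (a n) ^ (1/3 : ℝ))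
        = (Real.log (a n) - Real.log l) * ((a n) ^ (1/3 : ℝ) - l ^ (1/3 : ℝ)) := by ring
    have habs := le_abs_self ((Real.log (a n) - Real.log l) * ((a n) ^ (1/3 : ℝ) - l ^ (1/3 : ℝ)))
    have := min_le_right c₁ c₂
    rw [heq] at hkey
    linarith [hprod]
end
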